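/- For any matrix C with singular value decomposition C = UΣV' and any λ ≥ 0, the matrix U Σ_λ V' with (Σ_λ)_{ii} = max(Σ_{ii} - λ, 0) is the unique minimizer of X ↦ (1/2)‖X - C‖_F² + λ‖X‖_nuc. -/

import Mathlib

open Matrix BigOperators

/-- Singular values of a real matrix `M`: square roots of the eigenvalues of `Mᵀ * M`. -/
noncomputable def singularValues {m n : ℕ} (M : Matrix (Fin m) (Fin n) ℝ) : Fin n → ℝ :=
  fun i => Real.sqrt ((show (Mᵀ * M).IsHermitian by simpa using Matrix.isHermitian_conjTranspose_mul_self M).eigenvalues i)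

/-- Nuclear norm: sum of singular values. -/
noncomputable def nucNorm {m n : ℕ} (M : Matrix (Fin m) (Fin n) ℝ) : ℝ :=
  ∑ i, singularValues M i

/-- Frobenius norm. -/
noncomputable def frobNorm {m n : ℕ} (M : Matrix (Fin m) (Fin n) ℝ) : ℝ :=
  Real.sqrt (∑ i, ∑ j, (M i j) ^ 2)

/-- Effective rank. -/
noncomputable def effRank {m n : ℕ} (M : Matrix (Fin m) (Fin n) ℝ) : ℝ :=
  (nucNorm M / frobNorm M) ^ 2

section Aux
open Polynomial


lemma charpoly_conj_orth {k : ℕ} (W D : Matrix (Fin k) (Fin k) ℝ)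
    (hW : W * Wᵀ = 1) : (W * D * Wᵀ).charpoly = D.charpoly := by
  have hmap : ∀ (A B : Matrix (Fin k) (Fin k) ℝ),
      ((A * B).map (C : ℝ →+* ℝ[X])) = A.map C * B.map C := fun A B =>
    Matrix.map_mul
  have hone : (W.map (C : ℝ →+* ℝ[X])) * (Wᵀ.map C) = 1 := by
    rw [← hmap, hW]; simp
  have hscal : Matrix.scalar (Fin k) (X : ℝ[X]) = (X : ℝ[X]) • (1 : Matrix (Fin k) (Fin k) ℝ[X]) := by
    ext i j; by_cases h : i = j <;> simp [Matrix.scalar, h, Matrix.one_apply, Matrix.diagonal_apply]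
  have key : (W.map (C : ℝ →+* ℝ[X])) * charmatrix D * (Wᵀ.map C) = charmatrix (W * D * Wᵀ) := by
    unfold charmatrix
    simp only [RingHom.mapMatrix_apply]
    rw [Matrix.mul_sub, Matrix.sub_mul, hscal]
    rw [mul_smul_comm, smul_mul_assoc, mul_one, hone, ← hmap, ← hmap]
  have hdet : ∀ (A : Matrix (Fin k) (Fin k) ℝ), (A.map (C : ℝ →+* ℝ[X])).det = C A.det := by
    intro A; exact ((C : ℝ →+* ℝ[X]).map_det A).symm
  rw [Matrix.charpoly, ← key, Matrix.det_mul, Matrix.det_mul, hdet, hdet, Matrix.charpoly]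
  have : (C W.det) * (C Wᵀ.det) = 1 := by rw [← _root_.map_mul, ← Matrix.det_mul, hW]; simp
  calc C W.det * D.charmatrix.det * C Wᵀ.det = (C W.det * C Wᵀ.det) * D.charmatrix.det := by ring
    _ = D.charmatrix.det := by rw [this, one_mul]

lemma charpoly_diag {k : ℕ} (d : Fin k → ℝ) :
    (Matrix.diagonal d).charpoly = ∏ i, (X - C (d i)) := by
  rw [Matrix.charpoly]
  have : charmatrix (Matrix.diagonal d) = Matrix.diagonal (fun i => (X : ℝ[X]) - C (d i)) := by
    ext i j
    by_cases h : i = j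
    · subst h; simp [charmatrix_apply_eq]
    · simp [charmatrix_apply_ne _ _ _ h, Matrix.diagonal_apply_ne _ h]
  rw [this, Matrix.det_diagonal]
lemma eig_sum {k : ℕ} {B : Matrix (Fin k) (Fin k) ℝ} (hB : B.IsHermitian)
    (W : Matrix (Fin k) (Fin k) ℝ) (d : Fin k → ℝ)
    (hW : W * Wᵀ = 1) (hBW : B = W * Matrix.diagonal d * Wᵀ) (f : ℝ → ℝ) :
    ∑ i, f (hB.eigenvalues i) = ∑ i, f (d i) := by
  set W' : Matrix (Fin k) (Fin k) ℝ := (hB.eigenvectorUnitary : Matrix (Fin k) (Fin k) ℝ) with hW'def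
  have hmem := hB.eigenvectorUnitary.2
  have hW' : W' * W'ᵀ = 1 := by
    have := (Matrix.mem_unitaryGroup_iff).mp hmem
    simpa [Matrix.star_eq_conjTranspose, Matrix.conjTranspose_eq_transpose_of_trivial] using this
  have hs : B = W' * Matrix.diagonal hB.eigenvalues * W'ᵀ := by
    have := hB.spectral_theorem
    simpa [Matrix.star_eq_conjTranspose, Matrix.conjTranspose_eq_transpose_of_trivial,
      Function.comp] using this
  have h1 : B.charpoly = ∏ i, (X - C (hB.eigenvalues i)) := by
    conv_lhs => rw [hs]
    rw [charpoly_conj_orth _ _ hW', charpoly_diag]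
  have h2 : B.charpoly = ∏ i, (X - C (d i)) := by
    rw [hBW, charpoly_conj_orth _ _ hW, charpoly_diag]
  have hprod : ∀ g : Fin k → ℝ, (∏ i, (X - C (g i)))
      = ((Finset.univ.val.map g).map (fun a => X - C a)).prod := by
    intro g
    rw [Multiset.map_map, Finset.prod_eq_multiset_prod]
    rfl
  have hmult : Finset.univ.val.map hB.eigenvalues = Finset.univ.val.map d := by
    have := h1.symm.trans h2
    rw [hprod, hprod] at this
    have h3 := congrArg Polynomial.roots this
    rwa [roots_multiset_prod_X_sub_C, roots_multiset_prod_X_sub_C] at h3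
  have hsum : ∀ g : Fin k → ℝ, ∑ i, f (g i) = ((Finset.univ.val.map g).map f).sum := by
    intro g
    rw [Multiset.map_map, Finset.sum_eq_multiset_sum]
    rfl
  rw [hsum, hsum, hmult]

end Aux

section Aux2

lemma spectral_real {k : ℕ} (B : Matrix (Fin k) (Fin k) ℝ) (hB : B.IsHermitian) :
    ∃ W : Matrix (Fin k) (Fin k) ℝ, W * Wᵀ = 1 ∧ Wᵀ * W = 1 ∧
      B = W * Matrix.diagonal hB.eigenvalues * Wᵀ := by
  refine ⟨(hB.eigenvectorUnitary : Matrix (Fin k) (Fin k) ℝ), ?_, ?_, ?_⟩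
  · have := (Matrix.mem_unitaryGroup_iff).mp hB.eigenvectorUnitary.2
    simpa [Matrix.star_eq_conjTranspose, Matrix.conjTranspose_eq_transpose_of_trivial] using this
  · have := (Matrix.mem_unitaryGroup_iff').mp hB.eigenvectorUnitary.2
    simpa [Matrix.star_eq_conjTranspose, Matrix.conjTranspose_eq_transpose_of_trivial] using this
  · have := hB.spectral_theorem
    simpa [Matrix.star_eq_conjTranspose, Matrix.conjTranspose_eq_transpose_of_trivial,
      RCLike.ofReal_real_eq_id] using this
lemma trace_form {m n : ℕ} (P Q : Matrix (Fin m) (Fin n) ℝ) :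
    ∑ i, ∑ j, P i j * Q i j = (Pᵀ * Q).trace := by
  rw [Matrix.trace]
  simp only [Matrix.diag, Matrix.mul_apply, Matrix.transpose_apply]
  exact Finset.sum_comm

lemma inner_rot {m n : ℕ} (U : Matrix (Fin m) (Fin m) ℝ) (V : Matrix (Fin n) (Fin n) ℝ)
    (A X : Matrix (Fin m) (Fin n) ℝ) :
    ∑ i, ∑ j, (U * A * Vᵀ) i j * X i j = ∑ i, ∑ j, A i j * (Uᵀ * X * V) i j := by
  rw [trace_form, trace_form]
  have e1 : (U * A * Vᵀ)ᵀ * X = V * (Aᵀ * (Uᵀ * X)) := by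
    simp only [Matrix.transpose_mul, Matrix.transpose_transpose, Matrix.mul_assoc]
  have e2 : Aᵀ * (Uᵀ * X * V) = Aᵀ * (Uᵀ * X) * V := by
    simp only [Matrix.mul_assoc]
  rw [e1, e2, Matrix.trace_mul_comm]

lemma dual_bound {m n : ℕ} (lam : ℝ) (hlam : 0 ≤ lam)
    (U : Matrix (Fin m) (Fin m) ℝ) (V : Matrix (Fin n) (Fin n) ℝ)
    (M X : Matrix (Fin m) (Fin n) ℝ)
    (hUU : U * Uᵀ = 1) (hVV : V * Vᵀ = 1)
    (hMd : ∀ (i : Fin m) (j : Fin n), (i : ℕ) ≠ (j : ℕ) → M i j = 0)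
    (hM0 : ∀ i j, 0 ≤ M i j) (hMl : ∀ i j, M i j ≤ lam) :
    ∑ i, ∑ j, (U * M * Vᵀ) i j * X i j ≤ lam * nucNorm X := by
  have h := Matrix.isHermitian_conjTranspose_mul_self X
  set μ : Fin n → ℝ := h.eigenvalues with hμdef
  obtain ⟨W, hW1, hW2, hXXh⟩ := spectral_real _ h
  have hXX : Xᵀ * X = W * Matrix.diagonal μ * Wᵀ := by
    rw [← Matrix.conjTranspose_eq_transpose_of_trivial (A := X), hXXh]
  have hμ0 : ∀ i, 0 ≤ μ i := Matrix.eigenvalues_conjTranspose_mul_self_nonneg X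
  have hnuc : nucNorm X = ∑ k, Real.sqrt (μ k) := rfl
  set A : Matrix (Fin m) (Fin n) ℝ := Uᵀ * (X * W) with hAdef
  set B : Matrix (Fin n) (Fin n) ℝ := Wᵀ * V with hBdef
  have hAA : Aᵀ * A = Matrix.diagonal μ := by
    calc Aᵀ * A = (X * W)ᵀ * (U * Uᵀ) * (X * W) := by
          simp only [hAdef, Matrix.transpose_mul, Matrix.transpose_transpose, Matrix.mul_assoc]
      _ = Wᵀ * (Xᵀ * X) * W := by
          rw [hUU]; simp only [Matrix.transpose_mul, Matrix.mul_one, Matrix.mul_assoc]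
      _ = (Wᵀ * W) * Matrix.diagonal μ * (Wᵀ * W) := by
          rw [hXX]; simp only [Matrix.mul_assoc]
      _ = Matrix.diagonal μ := by rw [hW2]; simp
  have hBB : B * Bᵀ = 1 := by
    calc B * Bᵀ = Wᵀ * (V * Vᵀ) * W := by
          simp only [hBdef, Matrix.transpose_mul, Matrix.transpose_transpose, Matrix.mul_assoc]
      _ = 1 := by rw [hVV]; simp [hW2, Matrix.mul_one]
  have hA : ∀ k, ∑ i, (A i k)^2 = μ k := by
    intro k
    have := congrFun (congrFun hAA k) k
    simp only [Matrix.mul_apply, Matrix.transpose_apply, Matrix.diagonal_apply_eq] at this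
    rw [← this]; congr 1; ext i; ring
  have hB : ∀ k, ∑ j, (B k j)^2 = 1 := by
    intro k
    have := congrFun (congrFun hBB k) k
    simp only [Matrix.mul_apply, Matrix.transpose_apply, Matrix.one_apply_eq] at this
    rw [← this]; congr 1; ext j; ring
  have hXd : Uᵀ * X * V = A * B := by
    calc Uᵀ * X * V = Uᵀ * (X * (W * Wᵀ) * V) := by rw [hW1]; simp [Matrix.mul_assoc]
      _ = A * B := by simp only [hAdef, hBdef, Matrix.mul_assoc]
  rw [inner_rot, hXd, hnuc]
  have step1 : ∑ i, ∑ j, M i j * (A * B) i j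
      = ∑ k, ∑ i, ∑ j, M i j * (A i k * B k j) := by
    simp only [Matrix.mul_apply, Finset.mul_sum]
    calc ∑ i, ∑ j, ∑ k, M i j * (A i k * B k j)
        = ∑ i, ∑ k, ∑ j, M i j * (A i k * B k j) :=
          Finset.sum_congr rfl (fun i _ => Finset.sum_comm)
      _ = ∑ k, ∑ i, ∑ j, M i j * (A i k * B k j) := Finset.sum_comm
  rw [step1, Finset.mul_sum]
  apply Finset.sum_le_sum
  intro k _
  classical
  set D := (Finset.univ ×ˢ Finset.univ).filter
      (fun p : Fin m × Fin n => (p.1 : ℕ) = (p.2 : ℕ)) with hDdef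
  have hprod : ∑ i, ∑ j, M i j * (A i k * B k j)
      = ∑ p ∈ Finset.univ ×ˢ Finset.univ, M p.1 p.2 * (A p.1 k * B k p.2) := by
    rw [Finset.sum_product]
  have hfilter : ∑ p ∈ Finset.univ ×ˢ Finset.univ, M p.1 p.2 * (A p.1 k * B k p.2)
      = ∑ p ∈ D, M p.1 p.2 * (A p.1 k * B k p.2) := by
    refine (Finset.sum_filter_of_ne ?_).symm
    intro p _ hne
    by_contra hc
    exact hne (by rw [hMd p.1 p.2 hc, zero_mul])
  have hinj1 : ∀ p ∈ D, ∀ q ∈ D, p.1 = q.1 → p = q := by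
    intro p hp q hq hpq
    simp only [hDdef, Finset.mem_filter] at hp hq
    have : (p.2 : ℕ) = (q.2 : ℕ) := by omega
    exact Prod.ext hpq (Fin.ext this)
  have hinj2 : ∀ p ∈ D, ∀ q ∈ D, p.2 = q.2 → p = q := by
    intro p hp q hq hpq
    simp only [hDdef, Finset.mem_filter] at hp hq
    have h2 : (p.2 : ℕ) = (q.2 : ℕ) := by rw [hpq]
    have : (p.1 : ℕ) = (q.1 : ℕ) := by omega
    exact Prod.ext (Fin.ext this) hpq
  have e1 : ∑ p ∈ D, (A p.1 k)^2 ≤ μ k := by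
    rw [← hA k]
    calc ∑ p ∈ D, (A p.1 k)^2 = ∑ i ∈ D.image Prod.fst, (A i k)^2 := by
          rw [Finset.sum_image hinj1]
      _ ≤ ∑ i, (A i k)^2 :=
          Finset.sum_le_sum_of_subset_of_nonneg (Finset.subset_univ _)
            (fun i _ _ => sq_nonneg _)
  have e2 : ∑ p ∈ D, (B k p.2)^2 ≤ 1 := by
    rw [← hB k]
    calc ∑ p ∈ D, (B k p.2)^2 = ∑ j ∈ D.image Prod.snd, (B k j)^2 := by
          rw [Finset.sum_image hinj2]
      _ ≤ ∑ j, (B k j)^2 :=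
          Finset.sum_le_sum_of_subset_of_nonneg (Finset.subset_univ _)
            (fun j _ _ => sq_nonneg _)
  have hCS : ∑ p ∈ D, |A p.1 k| * |B k p.2| ≤ Real.sqrt (μ k) := by
    have sq := Finset.sum_mul_sq_le_sq_mul_sq D (fun p => |A p.1 k|) (fun p => |B k p.2|)
    simp only [sq_abs] at sq
    have h0 : (0:ℝ) ≤ ∑ p ∈ D, |A p.1 k| * |B k p.2| :=
      Finset.sum_nonneg fun p _ => mul_nonneg (abs_nonneg _) (abs_nonneg _)
    have := Real.sqrt_le_sqrt sq
    rw [Real.sqrt_sq h0] at this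
    refine this.trans ?_
    rw [Real.sqrt_mul (Finset.sum_nonneg fun p _ => sq_nonneg _)]
    calc Real.sqrt (∑ p ∈ D, (A p.1 k)^2) * Real.sqrt (∑ p ∈ D, (B k p.2)^2)
        ≤ Real.sqrt (μ k) * 1 := by
          apply mul_le_mul (Real.sqrt_le_sqrt e1)
            (by simpa using Real.sqrt_le_sqrt e2)
            (Real.sqrt_nonneg _) (Real.sqrt_nonneg _)
      _ = Real.sqrt (μ k) := mul_one _
  calc ∑ i, ∑ j, M i j * (A i k * B k j)
      = ∑ p ∈ D, M p.1 p.2 * (A p.1 k * B k p.2) := by rw [hprod, hfilter]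
    _ ≤ ∑ p ∈ D, lam * (|A p.1 k| * |B k p.2|) := by
        apply Finset.sum_le_sum
        intro p _
        have h1 : M p.1 p.2 * (A p.1 k * B k p.2) ≤ M p.1 p.2 * (|A p.1 k| * |B k p.2|) := by
          apply mul_le_mul_of_nonneg_left _ (hM0 _ _)
          calc A p.1 k * B k p.2 ≤ |A p.1 k * B k p.2| := le_abs_self _
            _ = |A p.1 k| * |B k p.2| := abs_mul _ _
        refine h1.trans (mul_le_mul_of_nonneg_right (hMl _ _) ?_)
        exact mul_nonneg (abs_nonneg _) (abs_nonneg _)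
    _ = lam * ∑ p ∈ D, |A p.1 k| * |B k p.2| := by rw [Finset.mul_sum]
    _ ≤ lam * Real.sqrt (μ k) := mul_le_mul_of_nonneg_left hCS hlam

end Aux2
theorem stmt17 {m n : ℕ}
    (C : Matrix (Fin m) (Fin n) ℝ)
    (U : Matrix (Fin m) (Fin m) ℝ) (S : Matrix (Fin m) (Fin n) ℝ)
    (V : Matrix (Fin n) (Fin n) ℝ)
    (hU : Uᵀ * U = 1 ∧ U * Uᵀ = 1) (hV : Vᵀ * V = 1 ∧ V * Vᵀ = 1)
    (hSdiag : ∀ (i : Fin m) (j : Fin n), (i : ℕ) ≠ (j : ℕ) → S i j = 0)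
    (hSnn : ∀ i j, 0 ≤ S i j)
    (hC : C = U * S * Vᵀ)
    (lam : ℝ) (hlam : 0 ≤ lam)
    (Slam : Matrix (Fin m) (Fin n) ℝ)
    (hSlam : ∀ (i : Fin m) (j : Fin n), Slam i j
      = if (i : ℕ) = (j : ℕ) then max (S i j - lam) 0 else 0) :
    (∀ X : Matrix (Fin m) (Fin n) ℝ,
        (1 / 2) * (∑ i, ∑ j, ((U * Slam * Vᵀ - C) i j) ^ 2)
            + lam * nucNorm (U * Slam * Vᵀ)
          ≤ (1 / 2) * (∑ i, ∑ j, ((X - C) i j) ^ 2) + lam * nucNorm X) ∧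
      (∀ X : Matrix (Fin m) (Fin n) ℝ,
        (1 / 2) * (∑ i, ∑ j, ((X - C) i j) ^ 2) + lam * nucNorm X
            = (1 / 2) * (∑ i, ∑ j, ((U * Slam * Vᵀ - C) i j) ^ 2)
              + lam * nucNorm (U * Slam * Vᵀ) →
          X = U * Slam * Vᵀ) := by
  classical
  set Xhat : Matrix (Fin m) (Fin n) ℝ := U * Slam * Vᵀ with hXhatdef
  -- the diagonal values of Slam, as a function on column indices
  set t : Fin n → ℝ := fun j => if h : (j : ℕ) < m then max (S ⟨(j : ℕ), h⟩ j - lam) 0 else 0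
    with htdef
  have ht0 : ∀ j, 0 ≤ t j := by
    intro j
    by_cases h : (j : ℕ) < m
    · simp only [htdef, dif_pos h]; exact le_max_right _ _
    · simp only [htdef, dif_neg h]; exact le_refl _
  -- column dot products of Slam
  have col_dot : ∀ j j' : Fin n, ∑ i, Slam i j * Slam i j'
      = if j = j' then (t j) ^ 2 else 0 := by
    intro j j'
    by_cases hjm : (j : ℕ) < m
    · have hi0 : ((⟨(j : ℕ), hjm⟩ : Fin m) : ℕ) = (j : ℕ) := rfl
      rw [Finset.sum_eq_single (⟨(j : ℕ), hjm⟩ : Fin m)]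
      · rw [hSlam, hSlam]
        simp only [Fin.val_mk]
        rw [if_pos trivial]
        by_cases hjj : j = j'
        · subst hjj
          simp only [if_true, htdef, dif_pos hjm]
          ring
        · have : (j : ℕ) ≠ (j' : ℕ) := fun hc => hjj (Fin.ext hc)
          rw [if_neg this, mul_zero, if_neg hjj]
      · intro b _ hb
        have : (b : ℕ) ≠ (j : ℕ) := fun hc => hb (Fin.ext hc)
        rw [hSlam, if_neg this, zero_mul]
      · intro hc; exact absurd (Finset.mem_univ _) hc
    · have hall : ∀ i : Fin m, Slam i j = 0 := by
        intro i
        have : (i : ℕ) ≠ (j : ℕ) := by omega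
        rw [hSlam, if_neg this]
      rw [Finset.sum_eq_zero (fun i _ => by rw [hall i, zero_mul])]
      by_cases hjj : j = j'
      · rw [if_pos hjj, htdef]; simp only [dif_neg hjm]; ring
      · rw [if_neg hjj]
  have col_sum : ∀ j : Fin n, ∑ i, Slam i j = t j := by
    intro j
    by_cases hjm : (j : ℕ) < m
    · have hi0 : ((⟨(j : ℕ), hjm⟩ : Fin m) : ℕ) = (j : ℕ) := rfl
      rw [Finset.sum_eq_single (⟨(j : ℕ), hjm⟩ : Fin m)]
      · rw [hSlam]
        simp only [Fin.val_mk]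
        rw [if_pos trivial, htdef]
        simp only [dif_pos hjm]
      · intro b _ hb
        have : (b : ℕ) ≠ (j : ℕ) := fun hc => hb (Fin.ext hc)
        rw [hSlam, if_neg this]
      · intro hc; exact absurd (Finset.mem_univ _) hc
    · rw [Finset.sum_eq_zero (fun i _ => by
        rw [hSlam, if_neg (by omega : (i : ℕ) ≠ (j : ℕ))])]
      rw [htdef]; simp only [dif_neg hjm]
  -- Slamᵀ * Slam is diagonal
  have hStS : Slamᵀ * Slam = Matrix.diagonal (fun j => (t j) ^ 2) := by
    ext j j'
    rw [Matrix.mul_apply]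
    simp only [Matrix.transpose_apply]
    rw [col_dot j j', Matrix.diagonal_apply]
  -- Xhatᵀ Xhat
  have hXhatT : Xhatᵀ * Xhat = V * Matrix.diagonal (fun j => (t j) ^ 2) * Vᵀ := by
    calc Xhatᵀ * Xhat = V * Slamᵀ * (Uᵀ * U) * (Slam * Vᵀ) := by
          simp only [hXhatdef, Matrix.transpose_mul, Matrix.transpose_transpose,
            Matrix.mul_assoc]
      _ = V * (Slamᵀ * Slam) * Vᵀ := by
          rw [hU.1]; simp only [Matrix.mul_one, Matrix.mul_assoc]
      _ = V * Matrix.diagonal (fun j => (t j) ^ 2) * Vᵀ := by rw [hStS]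
  -- nuclear norm of Xhat
  have nuc_hat : nucNorm Xhat = ∑ j, t j := by
    have h := Matrix.isHermitian_conjTranspose_mul_self Xhat
    have hBW : Xhatᴴ * Xhat = V * Matrix.diagonal (fun j => (t j) ^ 2) * Vᵀ := by
      rw [Matrix.conjTranspose_eq_transpose_of_trivial, hXhatT]
    have := eig_sum h V (fun j => (t j) ^ 2) hV.2 hBW Real.sqrt
    calc nucNorm Xhat = ∑ j, Real.sqrt (h.eigenvalues j) := rfl
      _ = ∑ j, Real.sqrt ((t j) ^ 2) := this
      _ = ∑ j, t j := by
          refine Finset.sum_congr rfl (fun j _ => ?_)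
          rw [Real.sqrt_sq (ht0 j)]
  -- the gradient matrix G = C - Xhat
  set G : Matrix (Fin m) (Fin n) ℝ := C - Xhat with hGdef
  have hGeq : G = U * (S - Slam) * Vᵀ := by
    rw [hGdef, hC, hXhatdef, ← Matrix.sub_mul, ← Matrix.mul_sub]
  -- properties of M := S - Slam
  have hMd : ∀ (i : Fin m) (j : Fin n), (i : ℕ) ≠ (j : ℕ) → (S - Slam) i j = 0 := by
    intro i j hij
    rw [Matrix.sub_apply, hSdiag i j hij, hSlam, if_neg hij, sub_zero]
  have hM0 : ∀ i j, 0 ≤ (S - Slam) i j := by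
    intro i j
    rw [Matrix.sub_apply, hSlam]
    by_cases hij : (i : ℕ) = (j : ℕ)
    · rw [if_pos hij, sub_nonneg]
      exact max_le (by linarith [hSnn i j]) (hSnn i j)
    · rw [if_neg hij, sub_zero]; exact hSnn i j
  have hMl : ∀ i j, (S - Slam) i j ≤ lam := by
    intro i j
    rw [Matrix.sub_apply, hSlam]
    by_cases hij : (i : ℕ) = (j : ℕ)
    · rw [if_pos hij]
      have := le_max_left (S i j - lam) 0
      linarith
    · rw [if_neg hij, sub_zero, hSdiag i j hij]; exact hlam
  -- inner product of G with Xhat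
  have hGXhat : ∑ i, ∑ j, G i j * Xhat i j = lam * nucNorm Xhat := by
    have hUXV : Uᵀ * Xhat * V = Slam := by
      calc Uᵀ * Xhat * V = (Uᵀ * U) * Slam * (Vᵀ * V) := by
            simp only [hXhatdef, Matrix.mul_assoc]
        _ = Slam := by rw [hU.1, hV.1]; simp
    rw [hGeq, inner_rot, hUXV]
    have hptw : ∀ (i : Fin m) (j : Fin n), (S - Slam) i j * Slam i j = lam * Slam i j := by
      intro i j
      rw [Matrix.sub_apply, hSlam]
      by_cases hij : (i : ℕ) = (j : ℕ)
      · rw [if_pos hij]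
        rcases le_total (S i j - lam) 0 with hle | hle
        · rw [max_eq_right hle]; ring
        · rw [max_eq_left hle]; ring
      · rw [if_neg hij]; ring
    calc ∑ i, ∑ j, (S - Slam) i j * Slam i j = ∑ i, ∑ j, lam * Slam i j := by
          exact Finset.sum_congr rfl fun i _ => Finset.sum_congr rfl fun j _ => hptw i j
      _ = lam * ∑ j, ∑ i, Slam i j := by
          rw [Finset.sum_comm]; simp only [Finset.mul_sum]
      _ = lam * ∑ j, t j := by
          congr 1; exact Finset.sum_congr rfl fun j _ => col_sum j
      _ = lam * nucNorm Xhat := by rw [nuc_hat]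
  -- the key inequality
  have key : ∀ X : Matrix (Fin m) (Fin n) ℝ,
      (1 / 2) * (∑ i, ∑ j, ((Xhat - C) i j) ^ 2) + lam * nucNorm Xhat
        + (1 / 2) * (∑ i, ∑ j, ((X - Xhat) i j) ^ 2)
      ≤ (1 / 2) * (∑ i, ∑ j, ((X - C) i j) ^ 2) + lam * nucNorm X := by
    intro X
    have hdual : ∑ i, ∑ j, G i j * X i j ≤ lam * nucNorm X := by
      rw [hGeq]
      exact dual_bound lam hlam U V (S - Slam) X hU.2 hV.2 hMd hM0 hMl
    have hsplit : ∑ i, ∑ j, ((X - C) i j) ^ 2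
        = (∑ i, ∑ j, ((X - Xhat) i j) ^ 2)
          - 2 * ((∑ i, ∑ j, G i j * X i j) - ∑ i, ∑ j, G i j * Xhat i j)
          + ∑ i, ∑ j, ((Xhat - C) i j) ^ 2 := by
      have hptw : ∀ (i : Fin m) (j : Fin n), ((X - C) i j) ^ 2
          = ((X - Xhat) i j) ^ 2 - 2 * (G i j * X i j) + 2 * (G i j * Xhat i j)
            + ((Xhat - C) i j) ^ 2 := by
        intro i j
        simp only [Matrix.sub_apply, hGdef]
        ring
      calc ∑ i, ∑ j, ((X - C) i j) ^ 2
          = ∑ i, ∑ j, (((X - Xhat) i j) ^ 2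
              - 2 * (G i j * X i j) + 2 * (G i j * Xhat i j) + ((Xhat - C) i j) ^ 2) :=
            Finset.sum_congr rfl fun i _ => Finset.sum_congr rfl fun j _ => hptw i j
        _ = _ := by
            simp only [Finset.sum_add_distrib, Finset.sum_sub_distrib, ← Finset.mul_sum]
            ring
    rw [hsplit, hGXhat]
    linarith
  have hXhatC : ∑ i, ∑ j, ((Xhat - C) i j) ^ 2 = ∑ i, ∑ j, ((Xhat - C) i j) ^ 2 := rfl
  constructor
  · intro X
    have := key X
    have hnn : 0 ≤ ∑ i, ∑ j, ((X - Xhat) i j) ^ 2 :=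
      Finset.sum_nonneg fun i _ => Finset.sum_nonneg fun j _ => sq_nonneg _
    linarith
  · intro X heq
    have := key X
    have hle : ∑ i, ∑ j, ((X - Xhat) i j) ^ 2 ≤ 0 := by linarith
    have hnn : ∀ i ∈ (Finset.univ : Finset (Fin m)),
        0 ≤ ∑ j, ((X - Xhat) i j) ^ 2 :=
      fun i _ => Finset.sum_nonneg fun j _ => sq_nonneg _
    have hzero : ∑ i, ∑ j, ((X - Xhat) i j) ^ 2 = 0 :=
      le_antisymm hle (Finset.sum_nonneg hnn)
    ext i j
    have h1 : ∑ j, ((X - Xhat) i j) ^ 2 = 0 :=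
      (Finset.sum_eq_zero_iff_of_nonneg hnn).mp hzero i (Finset.mem_univ i)
    have h2 : ((X - Xhat) i j) ^ 2 = 0 :=
      (Finset.sum_eq_zero_iff_of_nonneg fun j _ => sq_nonneg _).mp h1 j (Finset.mem_univ j)
    have := pow_eq_zero_iff (n := 2) (by norm_num) |>.mp h2
    rw [Matrix.sub_apply] at this
    linarith
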